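/- arXiv:2505.08716 — 6 statements merged into one kernel-verified Lean document; each statement's English description precedes it below -/
import Mathlib

section
/- Let n ≥ 2 be a natural number and let x, t be positive integers with 4x > n. Suppose q is a natural number satisfying t²(4x − n)² − 2nxt = q², and define y = t(4x − n) − q and z = t(4x − n) + q. Then y and z are positive integers and (4 : ℚ)/n = 1/x + 1/y + 1/z. -/
theorem stmt_0 (n x t q : ℕ) (hn : 2 ≤ n) (hx : 1 ≤ x) (ht : 1 ≤ t)
    (h4 : (n : ℤ) < 4 * x)
    (heq : (t : ℤ) ^ 2 * (4 * x - n) ^ 2 - 2 * n * x * t = (q : ℤ) ^ 2)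
    (y z : ℤ) (hy : y = (t : ℤ) * (4 * x - n) - q) (hz : z = (t : ℤ) * (4 * x - n) + q) :
    0 < y ∧ 0 < z ∧ (4 : ℚ) / n = 1 / x + 1 / (y : ℚ) + 1 / (z : ℚ) := by
  have hn' : (2:ℤ) ≤ n := by exact_mod_cast hn
  have hx' : (1:ℤ) ≤ x := by exact_mod_cast hx
  have ht' : (1:ℤ) ≤ t := by exact_mod_cast ht
  have hq0 : (0:ℤ) ≤ q := Int.natCast_nonneg q
  have hA : 0 < (t:ℤ) * (4 * x - n) := by nlinarith
  have key : ((t:ℤ) * (4 * x - n) - q) * ((t:ℤ) * (4 * x - n) + q) = 2 * n * x * t := by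
    linear_combination heq
  have hkeypos : 0 < ((t:ℤ) * (4 * x - n) - q) * ((t:ℤ) * (4 * x - n) + q) := by
    rw [key]
    have := mul_pos (mul_pos (by linarith : (0:ℤ) < n) (by linarith : (0:ℤ) < x)) (by linarith : (0:ℤ) < t)
    linarith
  have hyp : 0 < y := by
    rw [hy]
    nlinarith [hkeypos]
  have hzp : 0 < z := by nlinarith
  refine ⟨hyp, hzp, ?_⟩
  have hQ : (t:ℚ)^2 * (4 * x - n)^2 - 2 * n * x * t = (q:ℚ)^2 := by exact_mod_cast heq
  have hyQ : (y:ℚ) = (t:ℚ) * (4 * x - n) - q := by exact_mod_cast hy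
  have hzQ : (z:ℚ) = (t:ℚ) * (4 * x - n) + q := by exact_mod_cast hz
  have hn0 : (n:ℚ) ≠ 0 := by
    have : (0:ℚ) < n := by exact_mod_cast (by omega : 0 < n)
    exact ne_of_gt this
  have hx0 : (x:ℚ) ≠ 0 := by
    have : (0:ℚ) < x := by exact_mod_cast (by omega : 0 < x)
    exact ne_of_gt this
  have hy0 : (y:ℚ) ≠ 0 := by
    have : (0:ℚ) < (y:ℚ) := by exact_mod_cast hyp
    exact ne_of_gt this
  have hz0 : (z:ℚ) ≠ 0 := by
    have : (0:ℚ) < (z:ℚ) := by exact_mod_cast hzp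
    exact ne_of_gt this
  rw [hyQ, hzQ] at *
  field_simp
  linear_combination (4 * (x:ℚ) - n) * hQ
end

section
/- Let n ≥ 2 be a natural number. If there exist positive integers x, t with x ≥ ⌊n/4⌋ + 1 and a natural number q such that t²(4x − n)² − 2nxt = q², then there exist positive integers X, Y, Z with (4 : ℚ)/n = 1/X + 1/Y + 1/Z. -/
theorem stmt_1 (n : ℕ) (hn : 2 ≤ n)
    (h : ∃ x t q : ℕ, 1 ≤ x ∧ 1 ≤ t ∧ n / 4 + 1 ≤ x ∧
      (t : ℤ) ^ 2 * (4 * x - n) ^ 2 - 2 * n * x * t = (q : ℤ) ^ 2) :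
    ∃ X Y Z : ℕ, 0 < X ∧ 0 < Y ∧ 0 < Z ∧ (4 : ℚ) / n = 1 / X + 1 / Y + 1 / Z := by
  obtain ⟨x, t, q, hx, ht, hx4, heq⟩ := h
  have hn4 : n ≤ 4 * x := by omega
  have htZ : (1 : ℤ) ≤ t := by exact_mod_cast ht
  have hdZ : (0 : ℤ) < 4 * (x : ℤ) - n := by
    have : (n : ℤ) < 4 * x := by exact_mod_cast (by omega : n < 4 * x)
    linarith
  have hA : (0 : ℤ) < t * (4 * x - n) := by nlinarith
  have hqZ : (0 : ℤ) ≤ q := q.cast_nonneg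
  have hnZ : (2 : ℤ) ≤ n := by exact_mod_cast hn
  have hxZ : (1 : ℤ) ≤ x := by exact_mod_cast hx
  have h2nxt : (0:ℤ) < 2 * n * x * t :=
    mul_pos (mul_pos (by linarith) (by linarith)) (by linarith)
  have hqA : (q : ℤ) < t * (4 * x - n) := by nlinarith [heq, h2nxt, hA, hqZ]
  have hqA' : q ≤ t * (4 * x - n) := by
    have : (q : ℤ) ≤ (t * (4 * x - n) : ℕ) := by push_cast [hn4]; linarith
    exact_mod_cast this
  have hlt : q < t * (4 * x - n) := by
    have : (q : ℤ) < (t * (4 * x - n) : ℕ) := by push_cast [hn4]; linarith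
    exact_mod_cast this
  refine ⟨x, t * (4 * x - n) + q, t * (4 * x - n) - q, hx, by omega, by omega, ?_⟩
  have heqQ : (t : ℚ) ^ 2 * (4 * x - n) ^ 2 - 2 * n * x * t = (q : ℚ) ^ 2 := by
    exact_mod_cast heq
  have hnQ : (n : ℚ) ≠ 0 := by positivity
  have hxQ : (x : ℚ) ≠ 0 := by positivity
  have hqAQ : (q : ℚ) < t * (4 * (x : ℚ) - n) := by exact_mod_cast hqA
  push_cast [hn4, hqA', Nat.cast_sub]
  have hY : (t : ℚ) * (4 * x - n) + q ≠ 0 := by nlinarith [q.cast_nonneg (α := ℚ)]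
  have hZ : (t : ℚ) * (4 * x - n) - q ≠ 0 := by
    have : (0:ℚ) < (t:ℚ) * (4 * x - n) - q := by linarith
    linarith
  field_simp
  ring_nf
  nlinarith [heqQ]
end

section
/- If Mballa's Conjecture holds, that is, for every natural number n ≥ 2 there exist positive integers x, t with x ≥ ⌊n/4⌋ + 1 and a natural number q such that t²(4x − n)² − 2nxt = q², then the Erdős–Straus Conjecture holds: for every natural number n ≥ 2 there exist positive integers X, Y, Z with (4 : ℚ)/n = 1/X + 1/Y + 1/Z. -/
theorem stmt_2
    (mballa : ∀ n : ℕ, 2 ≤ n → ∃ x t q : ℕ, 1 ≤ x ∧ 1 ≤ t ∧ n / 4 + 1 ≤ x ∧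
      (t : ℤ) ^ 2 * (4 * x - n) ^ 2 - 2 * n * x * t = (q : ℤ) ^ 2) :
    ∀ n : ℕ, 2 ≤ n →
      ∃ X Y Z : ℕ, 0 < X ∧ 0 < Y ∧ 0 < Z ∧ (4 : ℚ) / n = 1 / X + 1 / Y + 1 / Z := by
  intro n hn
  obtain ⟨x, t, q, hx, ht, hx4, heq⟩ := mballa n hn
  have hn4 : n < 4 * x := by omega
  set m : ℕ := 4 * x - n with hm
  have hmz : ((m : ℤ)) = 4 * x - n := by omega
  have heq' : (t : ℤ) ^ 2 * (m : ℤ) ^ 2 - 2 * n * x * t = (q : ℤ) ^ 2 := by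
    rw [hmz]; exact heq
  have hnxt : (0 : ℤ) < 2 * n * x * t := by
    have : 0 < n := by omega
    positivity
  have hq : q < t * m := by
    by_contra h
    push_neg at h
    have h' : ((t * m : ℕ) : ℤ) ≤ (q : ℤ) := by exact_mod_cast h
    push_cast at h'
    have h2 : (t : ℤ) * m * ((t : ℤ) * m) ≤ (q : ℤ) * q :=
      mul_le_mul h' h' (by positivity) (by positivity)
    nlinarith [heq', h2]
  obtain ⟨Y, hY⟩ : ∃ Y, Y = t * m + q := ⟨_, rfl⟩
  obtain ⟨Z, hZ⟩ : ∃ Z, Z = t * m - q := ⟨_, rfl⟩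
  refine ⟨x, Y, Z, by omega, by omega, by omega, ?_⟩
  have hYZ : (Y : ℚ) * (Z : ℚ) = 2 * n * x * t := by
    have hz : ((Y : ℤ)) * ((Z : ℤ)) = 2 * n * x * t := by
      have hle : q ≤ t * m := le_of_lt hq
      rw [hY, hZ]
      push_cast [hle]
      nlinarith [heq']
    exact_mod_cast hz
  have hsum : (Y : ℚ) + (Z : ℚ) = 2 * t * m := by
    have hle : q ≤ t * m := le_of_lt hq
    rw [hY, hZ]
    push_cast [hle]
    ring
  have hmq : (m : ℚ) = 4 * x - n := by
    have : ((m : ℤ) : ℚ) = ((4 * (x:ℤ) - n : ℤ) : ℚ) := by exact_mod_cast hmz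
    push_cast at this
    exact this
  have hn0 : (n : ℚ) ≠ 0 := by positivity
  have hx0 : (x : ℚ) ≠ 0 := by positivity
  have hY0 : (Y : ℚ) ≠ 0 := by
    have : 0 < Y := by omega
    positivity
  have hZ0 : (Z : ℚ) ≠ 0 := by
    have : 0 < Z := by omega
    positivity
  field_simp
  linear_combination ((4:ℚ) * x - n) * hYZ - (n : ℚ) * x * hsum - 2 * n * x * t * hmq
end

section
/- Let s be a natural number with s > 1, let n ≥ 2, and let x, t be positive integers with x ≥ ⌊n^s/4⌋ + 1. Suppose q is a natural number satisfying t²(4x − n^s)² − 2n^s·x·t = q², and set y = t(4x − n^s) − q and z = t(4x − n^s) + q. Then, as real numbers, 1/y + 1/z < 8/n^s. -/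
theorem stmt_7 (s n x t q : ℕ) (hs : 1 < s) (hn : 2 ≤ n) (hx : 1 ≤ x) (ht : 1 ≤ t)
    (hxlb : n ^ s / 4 + 1 ≤ x)
    (heq : (t : ℤ) ^ 2 * (4 * x - n ^ s) ^ 2 - 2 * n ^ s * x * t = (q : ℤ) ^ 2)
    (y z : ℤ) (hy : y = (t : ℤ) * (4 * x - n ^ s) - q)
    (hz : z = (t : ℤ) * (4 * x - n ^ s) + q) :
    1 / (y : ℝ) + 1 / (z : ℝ) < 8 / (n : ℝ) ^ s := by
  have hns : (1:ℤ) ≤ (n:ℤ)^s := by exact_mod_cast Nat.one_le_pow s n (by omega)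
  have hP' : n ^ s + 1 ≤ 4 * x := by
    have hm := Nat.div_add_mod (n^s) 4
    have hmod : n^s % 4 < 4 := Nat.mod_lt _ (by norm_num)
    omega
  have hP : (1:ℤ) ≤ 4*(x:ℤ) - (n:ℤ)^s := by
    have hPc : ((n:ℤ)^s) + 1 ≤ 4*(x:ℤ) := by exact_mod_cast hP'
    linarith
  have htZ : (1:ℤ) ≤ (t:ℤ) := by exact_mod_cast ht
  have hxZ : (1:ℤ) ≤ (x:ℤ) := by exact_mod_cast hx
  have hA : (1:ℤ) ≤ (t:ℤ) * (4*(x:ℤ) - (n:ℤ)^s) := by nlinarith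
  have hprod : (0:ℤ) < 2 * (n:ℤ)^s * x * t := by positivity
  have hAsq : ((t:ℤ) * (4*(x:ℤ) - (n:ℤ)^s))^2 = (t:ℤ)^2 * (4*(x:ℤ) - (n:ℤ)^s)^2 := by ring
  have hq2 : (q:ℤ)^2 < ((t:ℤ) * (4*(x:ℤ) - (n:ℤ)^s))^2 := by linarith [heq]
  have hqA : (q:ℤ) < (t:ℤ) * (4*(x:ℤ) - (n:ℤ)^s) :=
    lt_of_pow_lt_pow_left₀ 2 (by linarith) hq2
  have hy1 : (1:ℤ) ≤ y := by omega
  have hz1 : (1:ℤ) ≤ z := by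
    have hq0 : (0:ℤ) ≤ (q:ℤ) := Int.natCast_nonneg q
    omega
  have hyz : y * z = 2 * (n:ℤ)^s * x * t := by rw [hy, hz]; linear_combination heq
  have hsum : y + z = 2 * ((t:ℤ) * (4*(x:ℤ) - (n:ℤ)^s)) := by rw [hy, hz]; ring
  -- move to reals
  have hyR : (0:ℝ) < (y:ℝ) := by exact_mod_cast hy1.trans_lt' (by norm_num)
  have hzR : (0:ℝ) < (z:ℝ) := by exact_mod_cast hz1.trans_lt' (by norm_num)
  have hnR : (0:ℝ) < (n:ℝ)^s := by positivity
  rw [div_add_div _ _ (ne_of_gt hyR) (ne_of_gt hzR), div_lt_div_iff₀ (by positivity) hnR]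
  have hyzR : (y:ℝ) * z = 2 * (n:ℝ)^s * x * t := by exact_mod_cast hyz
  have hsumR : (y:ℝ) + z = 2 * ((t:ℝ) * (4*(x:ℝ) - (n:ℝ)^s)) := by exact_mod_cast hsum
  have htR : (1:ℝ) ≤ t := by exact_mod_cast ht
  have hxR : (1:ℝ) ≤ x := by exact_mod_cast hx
  have hnsR : (1:ℝ) ≤ (n:ℝ)^s := by exact_mod_cast hns
  nlinarith [mul_pos (mul_pos (show (0:ℝ) < t by linarith) hnR)
      (show (0:ℝ) < (n:ℝ)^s + 4*x by nlinarith)]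
end

section
/- Let s be a natural number with s > 1. Suppose that for each natural number n ≥ 2 we are given positive integers x_n, t_n with x_n ≥ ⌊n^s/4⌋ + 1 and a natural number q_n satisfying t_n²(4x_n − n^s)² − 2n^s·x_n·t_n = q_n², and set y_n = t_n(4x_n − n^s) − q_n and z_n = t_n(4x_n − n^s) + q_n. Then the series ∑_{n≥2} (1/y_n + 1/z_n) of real numbers is summable. -/
theorem stmt_9 (s : ℕ) (hs : 1 < s) (x t : ℕ → ℕ) (q : ℕ → ℕ) (y z : ℕ → ℤ)
    (hxpos : ∀ n, 2 ≤ n → 1 ≤ x n) (htpos : ∀ n, 2 ≤ n → 1 ≤ t n)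
    (hxlb : ∀ n, 2 ≤ n → n ^ s / 4 + 1 ≤ x n)
    (heq : ∀ n, 2 ≤ n →
      (t n : ℤ) ^ 2 * (4 * x n - n ^ s) ^ 2 - 2 * n ^ s * x n * t n = (q n : ℤ) ^ 2)
    (hy : ∀ n, 2 ≤ n → y n = (t n : ℤ) * (4 * x n - n ^ s) - q n)
    (hz : ∀ n, 2 ≤ n → z n = (t n : ℤ) * (4 * x n - n ^ s) + q n) :
    Summable fun n : {m : ℕ // 2 ≤ m} => 1 / (y n : ℝ) + 1 / (z n : ℝ) := by
  have hsum4 : Summable (fun n : {m : ℕ // 2 ≤ m} => 4 / ((n : ℕ) : ℝ) ^ s) := by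
    have h1 : Summable (fun n : ℕ => 4 * (1 / (n : ℝ) ^ s)) :=
      (Real.summable_one_div_nat_pow.mpr (by omega)).mul_left 4
    have h2 := h1.subtype {m : ℕ | 2 ≤ m}
    apply h2.congr
    intro n
    simp [Function.comp]
    ring
  apply Summable.of_nonneg_of_le _ _ hsum4
  · intro n
    obtain ⟨N, hN⟩ := n
    have hd : (0 : ℤ) < 4 * x N - (N : ℤ) ^ s := by
      have h1 := hxlb N hN
      have h2 : N ^ s < (N ^ s / 4 + 1) * 4 := by omega
      have h3 : N ^ s < x N * 4 := lt_of_lt_of_le h2 (Nat.mul_le_mul_right 4 h1)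
      have : (N : ℤ) ^ s < (x N : ℤ) * 4 := by exact_mod_cast h3
      linarith
    have hzp : (0 : ℤ) < z N := by
      rw [hz N hN]
      have : (0 : ℤ) < (t N : ℤ) * (4 * x N - (N : ℤ) ^ s) := by
        have ht := htpos N hN
        have : (1 : ℤ) ≤ t N := by exact_mod_cast ht
        nlinarith
      have hq : (0 : ℤ) ≤ q N := Int.ofNat_nonneg _
      linarith
    have hprod : y N * z N = 2 * (N : ℤ) ^ s * x N * t N := by
      rw [hy N hN, hz N hN]
      have := heq N hN
      nlinarith [this]
    have hyp : (0 : ℤ) < y N := by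
      have hpp : (0 : ℤ) < y N * z N := by
        rw [hprod]
        have ht : (1 : ℤ) ≤ t N := by exact_mod_cast htpos N hN
        have hx : (1 : ℤ) ≤ x N := by exact_mod_cast hxpos N hN
        have hn : (0 : ℤ) < (N : ℤ) ^ s := by positivity
        positivity
      nlinarith
    have hyR : (0 : ℝ) < (y N : ℝ) := by exact_mod_cast hyp
    have hzR : (0 : ℝ) < (z N : ℝ) := by exact_mod_cast hzp
    positivity
  · intro n
    obtain ⟨N, hN⟩ := n
    simp only
    have ht : (1 : ℤ) ≤ t N := by exact_mod_cast htpos N hN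
    have hx : (1 : ℤ) ≤ x N := by exact_mod_cast hxpos N hN
    have hd : (0 : ℤ) < 4 * x N - (N : ℤ) ^ s := by
      have h1 := hxlb N hN
      have h2 : N ^ s < (N ^ s / 4 + 1) * 4 := by omega
      have h3 : N ^ s < x N * 4 := lt_of_lt_of_le h2 (Nat.mul_le_mul_right 4 h1)
      have : (N : ℤ) ^ s < (x N : ℤ) * 4 := by exact_mod_cast h3
      linarith
    have hzp : (0 : ℤ) < z N := by
      rw [hz N hN]
      have h1 : (0 : ℤ) < (t N : ℤ) * (4 * x N - (N : ℤ) ^ s) := by nlinarith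
      have hq : (0 : ℤ) ≤ q N := Int.ofNat_nonneg _
      linarith
    have hprod : y N * z N = 2 * (N : ℤ) ^ s * x N * t N := by
      rw [hy N hN, hz N hN]
      nlinarith [heq N hN]
    have hyp : (0 : ℤ) < y N := by
      have hpp : (0 : ℤ) < y N * z N := by
        rw [hprod]
        have hn : (0 : ℤ) < (N : ℤ) ^ s := by positivity
        positivity
      nlinarith
    have hadd : y N + z N = 2 * (t N : ℤ) * (4 * x N - (N : ℤ) ^ s) := by
      rw [hy N hN, hz N hN]; ring
    have hyR : (0 : ℝ) < (y N : ℝ) := by exact_mod_cast hyp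
    have hzR : (0 : ℝ) < (z N : ℝ) := by exact_mod_cast hzp
    have hNp : (0 : ℝ) < ((N : ℕ) : ℝ) := by exact_mod_cast (by omega : 0 < N)
    have hnR : (0 : ℝ) < ((N : ℕ) : ℝ) ^ s := by positivity
    have key : ((z N + y N) * (N : ℤ) ^ s) ≤ 4 * (y N * z N) := by
      rw [add_comm (z N) (y N), hadd, hprod]
      have hn : (0 : ℤ) ≤ (N : ℤ) ^ s := by positivity
      nlinarith [mul_nonneg (mul_nonneg (by linarith : (0:ℤ) ≤ (t N : ℤ)) hn) hn]
    rw [div_add_div _ _ hyR.ne' hzR.ne', div_le_div_iff₀ (by positivity) hnR]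
    have keyR : (((z N : ℝ) + y N) * ((N : ℕ) : ℝ) ^ s) ≤ 4 * ((y N : ℝ) * z N) := by
      exact_mod_cast key
    nlinarith [keyR]
end

section
/- Let s be a natural number with s > 1 and let n ≥ 2. If there exist positive integers x, t with x ≥ ⌊n^s/4⌋ + 1 and a natural number q such that t²(4x − n^s)² − 2n^s·x·t = q², then there exist positive integers X, Y, Z with (4 : ℚ)/n^s = 1/X + 1/Y + 1/Z. -/
theorem stmt_11 (s n : ℕ) (hs : 1 < s) (hn : 2 ≤ n)
    (h : ∃ x t q : ℕ, 1 ≤ x ∧ 1 ≤ t ∧ n ^ s / 4 + 1 ≤ x ∧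
      (t : ℤ) ^ 2 * (4 * x - n ^ s) ^ 2 - 2 * n ^ s * x * t = (q : ℤ) ^ 2) :
    ∃ X Y Z : ℕ, 0 < X ∧ 0 < Y ∧ 0 < Z ∧
      (4 : ℚ) / (n : ℚ) ^ s = 1 / X + 1 / Y + 1 / Z := by
  obtain ⟨x, t, q, hx, ht, hx4, heq⟩ := h
  have hNpos : 0 < n ^ s := pow_pos (by omega) s
  have hDnat : n ^ s < 4 * x := by omega
  have hD : (n : ℤ) ^ s < 4 * x := by exact_mod_cast hDnat
  have hDpos : (0 : ℤ) < 4 * (x : ℤ) - (n : ℤ) ^ s := by linarith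
  have htpos : (0 : ℤ) < (t : ℤ) := by exact_mod_cast ht
  have hxpos : (0 : ℤ) < (x : ℤ) := by exact_mod_cast hx
  have hNposZ : (0 : ℤ) < (n : ℤ) ^ s := by exact_mod_cast hNpos
  have hkey : ((t : ℤ) * (4 * x - n ^ s)) ^ 2 - q ^ 2 = 2 * n ^ s * x * t := by
    linear_combination heq
  have hqnn : (0 : ℤ) ≤ (q : ℤ) := Int.natCast_nonneg q
  have hapos : (0 : ℤ) < (t : ℤ) * (4 * x - n ^ s) := mul_pos htpos hDpos
  have hqlt : (q : ℤ) < (t : ℤ) * (4 * x - n ^ s) := by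
    nlinarith [mul_pos (mul_pos hNposZ hxpos) htpos]
  refine ⟨x, ((t : ℤ) * (4 * x - n ^ s) + q).toNat,
    ((t : ℤ) * (4 * x - n ^ s) - q).toNat, hx, ?_, ?_, ?_⟩
  · have : (0 : ℤ) < (t : ℤ) * (4 * x - n ^ s) + q := by linarith
    omega
  · have : (0 : ℤ) < (t : ℤ) * (4 * x - n ^ s) - q := by linarith
    omega
  · have hY : (((((t : ℤ) * (4 * x - n ^ s) + q).toNat : ℤ)) : ℚ)
        = (t : ℚ) * (4 * x - n ^ s) + q := by
      rw [Int.toNat_of_nonneg (by linarith)]; push_cast; ring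
    have hZ : (((((t : ℤ) * (4 * x - n ^ s) - q).toNat : ℤ)) : ℚ)
        = (t : ℚ) * (4 * x - n ^ s) - q := by
      rw [Int.toNat_of_nonneg (by linarith)]; push_cast; ring
    have hYQ : ((((t : ℤ) * (4 * x - n ^ s) + q).toNat : ℚ))
        = (t : ℚ) * (4 * x - n ^ s) + q := by exact_mod_cast hY
    have hZQ : ((((t : ℤ) * (4 * x - n ^ s) - q).toNat : ℚ))
        = (t : ℚ) * (4 * x - n ^ s) - q := by exact_mod_cast hZ
    have hkeyQ : ((t : ℚ) * (4 * x - n ^ s)) ^ 2 - q ^ 2 = 2 * n ^ s * x * t := by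
      exact_mod_cast hkey
    have hNQ : ((n : ℚ)) ^ s ≠ 0 := by positivity
    have hxQ : (x : ℚ) ≠ 0 := by positivity
    have hDQ : (0 : ℚ) < 4 * (x : ℚ) - (n : ℚ) ^ s := by exact_mod_cast hDpos
    have htQ : (0 : ℚ) < (t : ℚ) := by exact_mod_cast htpos
    have hqQ : (0 : ℚ) ≤ (q : ℚ) := by positivity
    have hqltQ : (q : ℚ) < (t : ℚ) * (4 * x - n ^ s) := by exact_mod_cast hqlt
    rw [hYQ, hZQ]
    have hYne : (t : ℚ) * (4 * x - n ^ s) + q ≠ 0 := by nlinarith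
    have hZne : (t : ℚ) * (4 * x - n ^ s) - q ≠ 0 := by nlinarith
    field_simp
    linear_combination (4 * (x : ℚ) - (n : ℚ) ^ s) * hkeyQ
end
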